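/- arXiv:math-ph/0003042 — 5 statements merged into one kernel-verified Lean document; each statement's English description precedes it below -/
import Mathlib

section
/- For every α ∈ ℂ, the six-vertex R-matrix family u ↦ R_α(u) satisfies the quantum Yang–Baxter equation with spectral parameter: for all λ, μ ∈ ℂ, (R_α(λ−μ) ⊗ id)(R_α(λ))₁₃(id ⊗ R_α(μ)) = (id ⊗ R_α(μ))(R_α(λ))₁₃(R_α(λ−μ) ⊗ id) as linear maps on ℂ² ⊗ ℂ² ⊗ ℂ². -/
/-!
STATEMENT 0: For every α ∈ ℂ, the six-vertex R-matrix family u ↦ R_α(u) satisfies the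
quantum Yang–Baxter equation with spectral parameter.

Linear maps on ℂⁿ ⊗ ℂⁿ are represented by their matrices in the standard product basis,
i.e. by elements of `Matrix (Fin n × Fin n) (Fin n × Fin n) ℂ`, with the convention that
`M p q` is the coefficient of the basis vector `p` (output) in the image of the basis
vector `q` (input), so that matrix multiplication corresponds to composition.
-/

open Complex

/-- `R ⊗ id` acting on the first two factors of ℂⁿ ⊗ ℂⁿ ⊗ ℂⁿ. -/
noncomputable def leg12 {n : ℕ} (R : Matrix (Fin n × Fin n) (Fin n × Fin n) ℂ) :
    Matrix (Fin n × Fin n × Fin n) (Fin n × Fin n × Fin n) ℂ :=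
  fun p q => R (p.1, p.2.1) (q.1, q.2.1) * (if p.2.2 = q.2.2 then 1 else 0)

/-- `id ⊗ R` acting on the last two factors of ℂⁿ ⊗ ℂⁿ ⊗ ℂⁿ. -/
noncomputable def leg23 {n : ℕ} (R : Matrix (Fin n × Fin n) (Fin n × Fin n) ℂ) :
    Matrix (Fin n × Fin n × Fin n) (Fin n × Fin n × Fin n) ℂ :=
  fun p q => (if p.1 = q.1 then 1 else 0) * R (p.2.1, p.2.2) (q.2.1, q.2.2)

/-- `R` acting on the first and third factors of ℂⁿ ⊗ ℂⁿ ⊗ ℂⁿ. -/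
noncomputable def leg13 {n : ℕ} (R : Matrix (Fin n × Fin n) (Fin n × Fin n) ℂ) :
    Matrix (Fin n × Fin n × Fin n) (Fin n × Fin n × Fin n) ℂ :=
  fun p q => R (p.1, p.2.2) (q.1, q.2.2) * (if p.2.1 = q.2.1 then 1 else 0)

/-- The quantum Yang–Baxter equation with spectral parameter for a family of linear maps
on ℂⁿ ⊗ ℂⁿ. -/
def SpectralYBE {n : ℕ} (R : ℂ → Matrix (Fin n × Fin n) (Fin n × Fin n) ℂ) : Prop :=
  ∀ lam mu : ℂ,
    leg12 (R (lam - mu)) * leg13 (R lam) * leg23 (R mu) =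
      leg23 (R mu) * leg13 (R lam) * leg12 (R (lam - mu))

/-- The six-vertex R-matrix `R_α(u)` on ℂ² ⊗ ℂ²: in the ordered basis
(e₁⊗e₁, e₁⊗e₂, e₂⊗e₁, e₂⊗e₂) it has diagonal (sinh(u+α), sinh u, sinh u, sinh(u+α)),
entries sinh α in positions (2,3) and (3,2), and zeros elsewhere. -/
noncomputable def sixVertexR (α u : ℂ) : Matrix (Fin 2 × Fin 2) (Fin 2 × Fin 2) ℂ :=
  fun p q =>
    if p = q then (if p.1 = p.2 then Complex.sinh (u + α) else Complex.sinh u)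
    else if p.1 = q.2 ∧ p.2 = q.1 ∧ p.1 ≠ p.2 then Complex.sinh α
    else 0

set_option maxHeartbeats 12000000 in
theorem sixVertex_satisfies_YBE (α : ℂ) : SpectralYBE (fun u => sixVertexR α u) := by
  intro lam mu
  ext ⟨p1, p2, p3⟩ ⟨q1, q2, q3⟩
  fin_cases p1 <;> fin_cases p2 <;> fin_cases p3 <;> fin_cases q1 <;> fin_cases q2 <;>
    fin_cases q3 <;>
  · simp only [Matrix.mul_apply, leg12, leg13, leg23, sixVertexR, Fintype.sum_prod_type,
      Fin.sum_univ_two]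
    norm_num [Prod.ext_iff]
    all_goals simp only [Complex.sinh_add, Complex.sinh_sub, Complex.cosh_add, Complex.cosh_sub]
    all_goals first
      | ring1
      | linear_combination (Complex.sinh mu * Complex.sinh α ^ 2) *
          Complex.cosh_sq_sub_sinh_sq lam
      | linear_combination (-(Complex.sinh mu * Complex.sinh α ^ 2)) *
          Complex.cosh_sq_sub_sinh_sq lam
      | linear_combination
          (Complex.cosh lam * Complex.sinh α ^ 3 +
              Complex.sinh lam * Complex.sinh α ^ 2 * Complex.cosh α) *
            Complex.cosh_sq_sub_sinh_sq mu +
          (Complex.sinh lam * Complex.sinh mu * Complex.cosh mu * Complex.sinh α -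
              Complex.cosh lam * Complex.sinh mu ^ 2 * Complex.sinh α) *
            Complex.cosh_sq_sub_sinh_sq α
      | linear_combination
          (-(Complex.cosh lam * Complex.sinh α ^ 3 +
              Complex.sinh lam * Complex.sinh α ^ 2 * Complex.cosh α)) *
            Complex.cosh_sq_sub_sinh_sq mu +
          (Complex.cosh lam * Complex.sinh mu ^ 2 * Complex.sinh α -
              Complex.sinh lam * Complex.sinh mu * Complex.cosh mu * Complex.sinh α) *
            Complex.cosh_sq_sub_sinh_sq α
end

section
/- Fix α ∈ ℂ with sinh α ≠ 0, set J = cosh α and ε(u) = −sinh(u)/(2 sinh α). Let H₂ = σ₁⊗σ₁ + σ₂⊗σ₂ + J σ₃⊗σ₃ act on ℂ² ⊗ ℂ² and let P be the flip map P(v⊗w) = w⊗v. Then the End(ℂ²⊗ℂ²)-valued functions F(u) = sinh(u+α)⁻¹ · R_α(u) and G(u) = (1 − J·ε(u))⁻¹ · exp(−ε(u) H₂) ∘ P, defined for u in a neighbourhood of 0 in ℂ, agree to first order at u = 0: F(0) = G(0) = P and F′(0) = G′(0). (That is, the XXZ R-matrix exp(−ε H₂)∘P coincides, up to a global scalar factor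 and O(ε²) terms, with the six-vertex Yang–Baxter solution R_α(u) under the parametrization ε = −sinh(u)/(2 sinh α), J = cosh α.) -/
/-!
STATEMENT 4: Fix α ∈ ℂ with sinh α ≠ 0, J = cosh α, ε(u) = −sinh(u)/(2 sinh α).
With H₂ = σ₁⊗σ₁ + σ₂⊗σ₂ + J σ₃⊗σ₃ on ℂ² ⊗ ℂ² and P the flip map, the functions
F(u) = sinh(u+α)⁻¹ · R_α(u) and G(u) = (1 − J ε(u))⁻¹ · exp(−ε(u) H₂) ∘ P agree to
first order at u = 0: F(0) = G(0) = P and F′(0) = G′(0).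

Operators on ℂ² ⊗ ℂ² are represented by their matrices in the standard product basis,
`exp` is the matrix exponential (`NormedSpace.exp ℂ`), and the equality of derivatives
is stated entrywise: there is a single matrix D which is the entrywise derivative of
both F and G at 0.
-/

open Complex Matrix Kronecker

/-- The Pauli matrices σ₁, σ₂, σ₃. -/
noncomputable def pauli : Fin 3 → Matrix (Fin 2) (Fin 2) ℂ
  | 0 => !![0, 1; 1, 0]
  | 1 => !![0, -Complex.I; Complex.I, 0]
  | 2 => !![1, 0; 0, -1]

/-- The two-site XXZ Hamiltonian H₂ = σ₁⊗σ₁ + σ₂⊗σ₂ + J σ₃⊗σ₃ on ℂ² ⊗ ℂ². -/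
noncomputable def H2 (J : ℂ) : Matrix (Fin 2 × Fin 2) (Fin 2 × Fin 2) ℂ :=
  pauli 0 ⊗ₖ pauli 0 + pauli 1 ⊗ₖ pauli 1 + J • (pauli 2 ⊗ₖ pauli 2)

/-- The flip map P(v ⊗ w) = w ⊗ v on ℂ² ⊗ ℂ². -/
noncomputable def flipP : Matrix (Fin 2 × Fin 2) (Fin 2 × Fin 2) ℂ :=
  fun p q => if p.1 = q.2 ∧ p.2 = q.1 then 1 else 0

/-!
Both sides live in the three-dimensional space of matrices of six-vertex shape
`sixVertexMatrix a b c` (diagonal `(a, b, b, a)`, `c` on the two swapped off-diagonal slots):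
`R_α(u)` is of this shape, `P = sixVertexMatrix 1 0 1` and `H₂ P = sixVertexMatrix J 2 (-J)`.
Since `exp` has derivative `1` at `0` and `ε 0 = 0`, the product rule gives
`G'(0) = J ε'(0) P - ε'(0) H₂ P = ε'(0) • sixVertexMatrix 0 (-2) (2J)`, and with
`ε'(0) = -1 / (2 sinh α)`, `J = cosh α` this is the derivative of the coefficients
`(1, sinh u / sinh (u + α), sinh α / sinh (u + α))` of `F`.
-/

def sixVertexMatrix {ι R : Type*} [DecidableEq ι] [Zero R] (a b c : R) :
    Matrix (ι × ι) (ι × ι) R :=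
  fun p q =>
    if p = q then (if p.1 = p.2 then a else b)
    else if p.1 = q.2 ∧ p.2 = q.1 ∧ p.1 ≠ p.2 then c
    else 0

section SixVertexMatrix

variable {ι R : Type*} [DecidableEq ι]

theorem smul_sixVertexMatrix [MulZeroClass R] (k a b c : R) :
    k • (sixVertexMatrix a b c : Matrix (ι × ι) (ι × ι) R) =
      sixVertexMatrix (k * a) (k * b) (k * c) := by
  ext p q
  simp only [sixVertexMatrix, Matrix.smul_apply, smul_eq_mul]
  split_ifs <;> simp

theorem sixVertexMatrix_add [AddZeroClass R] (a b c a' b' c' : R) :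
    (sixVertexMatrix a b c : Matrix (ι × ι) (ι × ι) R) + sixVertexMatrix a' b' c' =
      sixVertexMatrix (a + a') (b + b') (c + c') := by
  ext p q
  simp only [sixVertexMatrix, Matrix.add_apply]
  split_ifs <;> simp

theorem hasDerivAt_sixVertexMatrix [Fintype ι] {𝕜 : Type*} [NontriviallyNormedField 𝕜]
    {a b c : 𝕜 → 𝕜} {a' b' c' x : 𝕜} (ha : HasDerivAt a a' x) (hb : HasDerivAt b b' x)
    (hc : HasDerivAt c c' x) :
    HasDerivAt (fun u => (sixVertexMatrix (a u) (b u) (c u) : Matrix (ι × ι) (ι × ι) 𝕜))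
      (sixVertexMatrix a' b' c') x := by
  refine hasDerivAt_pi.2 fun p => hasDerivAt_pi.2 fun q => ?_
  simp only [sixVertexMatrix]
  split_ifs
  exacts [ha, hb, hc, hasDerivAt_const x 0]

end SixVertexMatrix

theorem HasDerivAt.matrix_apply {𝕜 α m n : Type*} [NontriviallyNormedField 𝕜]
    [NormedAddCommGroup α] [NormedSpace 𝕜 α] [Fintype m] [Fintype n]
    {M : 𝕜 → Matrix m n α} {M' : Matrix m n α} {x : 𝕜} (h : HasDerivAt M M' x) (i : m) (j : n) :
    HasDerivAt (fun u => M u i j) (M' i j) x :=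
  hasDerivAt_pi.1 (hasDerivAt_pi.1 h i) j

theorem hasDerivAt_smul_exp_smul_mul {𝕂 𝔸 : Type*} [RCLike 𝕂] [NormedRing 𝔸]
    [NormedAlgebra 𝕂 𝔸] [CompleteSpace 𝔸] (A B : 𝔸) {f g : 𝕂 → 𝕂} {f' g' : 𝕂}
    (hf : HasDerivAt f f' 0) (hg : HasDerivAt g g' 0) (hf0 : f 0 = 0) (hg0 : g 0 = 1) :
    HasDerivAt (fun u => g u • (NormedSpace.exp (f u • A) * B)) (f' • (A * B) + g' • B) 0 := by
  have hexp := ((hasDerivAt_exp_smul_const A (f 0)).scomp 0 hf).mul_const B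
  refine (hg.smul hexp).congr_deriv ?_
  simp [hf0, hg0]

theorem flipP_eq_sixVertexMatrix : flipP = sixVertexMatrix 1 0 1 := by
  ext ⟨a, b⟩ ⟨c, d⟩
  fin_cases a <;> fin_cases b <;> fin_cases c <;> fin_cases d <;>
    simp [flipP, sixVertexMatrix]

theorem H2_mul_flipP (J : ℂ) : H2 J * flipP = sixVertexMatrix J 2 (-J) := by
  ext ⟨a, b⟩ ⟨c, d⟩
  fin_cases a <;> fin_cases b <;> fin_cases c <;> fin_cases d <;>
    simp [H2, pauli, flipP, sixVertexMatrix, mul_apply, Fintype.sum_prod_type,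
      Fin.sum_univ_two, kroneckerMap_apply] <;> ring

theorem inv_sinh_smul_sixVertexR_eq (α u : ℂ) :
    (Complex.sinh (u + α))⁻¹ • sixVertexR α u =
      sixVertexMatrix ((Complex.sinh (u + α))⁻¹ * Complex.sinh (u + α))
        ((Complex.sinh (u + α))⁻¹ * Complex.sinh u) ((Complex.sinh (u + α))⁻¹ * Complex.sinh α) :=
  smul_sixVertexMatrix _ _ _ _

theorem inv_sinh_smul_sixVertexR_zero {α : ℂ} (hα : Complex.sinh α ≠ 0) :
    (Complex.sinh (0 + α))⁻¹ • sixVertexR α 0 = flipP := by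
  rw [inv_sinh_smul_sixVertexR_eq, flipP_eq_sixVertexMatrix]
  simp [hα]

theorem hasDerivAt_inv_sinh_smul_sixVertexR {α : ℂ} (hα : Complex.sinh α ≠ 0) :
    HasDerivAt (fun u => (Complex.sinh (u + α))⁻¹ • sixVertexR α u)
      (sixVertexMatrix 0 (Complex.sinh α)⁻¹ (-(Complex.cosh α / Complex.sinh α))) 0 := by
  have hs : HasDerivAt (fun u => Complex.sinh (u + α)) (Complex.cosh α) 0 := by
    simpa using ((hasDerivAt_id (0 : ℂ)).add_const α).csinh
  have hinv : HasDerivAt (fun u => (Complex.sinh (u + α))⁻¹)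
      (-Complex.cosh α / Complex.sinh α ^ 2) 0 := by
    simpa using hs.fun_inv (by simpa using hα)
  simp only [inv_sinh_smul_sixVertexR_eq]
  refine hasDerivAt_sixVertexMatrix ?_ ?_ ?_
  · refine (hinv.fun_mul hs).congr_deriv ?_
    rw [zero_add]
    field_simp
    ring
  · refine (hinv.fun_mul (Complex.hasDerivAt_sinh 0)).congr_deriv ?_
    simp
  · refine (hinv.mul_const (Complex.sinh α)).congr_deriv ?_
    field_simp

-- Any Banach-algebra norm on matrices will do: `HasDerivAt` only sees the matrix topology.
open scoped Matrix.Norms.Operator in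
theorem hasDerivAt_inv_smul_exp_H2_mul_flipP (J : ℂ) {ε : ℂ → ℂ} {e : ℂ}
    (hε : HasDerivAt ε e 0) (hε0 : ε 0 = 0) :
    HasDerivAt (fun u => (1 - J * ε u)⁻¹ • (NormedSpace.exp (-(ε u) • H2 J) * flipP))
      (e • sixVertexMatrix 0 (-2) (2 * J)) 0 := by
  have hg : HasDerivAt (fun u => (1 - J * ε u)⁻¹) (J * e) 0 := by
    simpa [hε0] using ((hε.const_mul J).const_sub 1).fun_inv (by simp [hε0])
  refine (hasDerivAt_smul_exp_smul_mul (H2 J) flipP hε.neg hg (by simp [hε0])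
    (by simp [hε0])).congr_deriv ?_
  rw [H2_mul_flipP, flipP_eq_sixVertexMatrix, smul_sixVertexMatrix, smul_sixVertexMatrix,
    smul_sixVertexMatrix, sixVertexMatrix_add]
  congr 1 <;> ring

theorem sixVertex_matches_XXZ_to_first_order (α : ℂ) (hα : Complex.sinh α ≠ 0)
    (J : ℂ) (hJ : J = Complex.cosh α)
    (ε : ℂ → ℂ) (hε : ∀ u, ε u = -Complex.sinh u / (2 * Complex.sinh α))
    (F G : ℂ → Matrix (Fin 2 × Fin 2) (Fin 2 × Fin 2) ℂ)
    (hF : ∀ u, F u = (Complex.sinh (u + α))⁻¹ • sixVertexR α u)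
    (hG : ∀ u, G u = (1 - J * ε u)⁻¹ • (NormedSpace.exp (-(ε u) • H2 J) * flipP)) :
    F 0 = flipP ∧ G 0 = flipP ∧
      ∃ D : Matrix (Fin 2 × Fin 2) (Fin 2 × Fin 2) ℂ,
        (∀ p q, HasDerivAt (fun u => F u p q) (D p q) 0) ∧
        (∀ p q, HasDerivAt (fun u => G u p q) (D p q) 0) := by
  have hε0 : ε 0 = 0 := by simp [hε]
  have hε' : HasDerivAt ε (-(1 / (2 * Complex.sinh α))) 0 := by
    rw [funext hε]
    simpa [neg_div] using (Complex.hasDerivAt_sinh 0).neg.div_const (2 * Complex.sinh α)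
  have hF' := hasDerivAt_inv_sinh_smul_sixVertexR hα
  have hG' := hasDerivAt_inv_smul_exp_H2_mul_flipP J hε' hε0
  have hD : -(1 / (2 * Complex.sinh α)) •
      (sixVertexMatrix 0 (-2) (2 * J) : Matrix (Fin 2 × Fin 2) (Fin 2 × Fin 2) ℂ) =
      sixVertexMatrix 0 (Complex.sinh α)⁻¹ (-(Complex.cosh α / Complex.sinh α)) := by
    rw [smul_sixVertexMatrix, hJ, mul_zero]
    congr 1 <;> field_simp
  rw [← funext hF] at hF'
  rw [← funext hG, hD] at hG'
  refine ⟨by rw [hF, inv_sinh_smul_sixVertexR_zero hα], by simp [hG, hε0], _,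
    hF'.matrix_apply, hG'.matrix_apply⟩
end

section
/- Let A, B, D be linear maps on ℂⁿ ⊗ ℂⁿ with A invertible, satisfying the Yang–Baxter-type relation A₁₂ B₁₃ D₂₃ = D₂₃ B₁₃ A₁₂ on ℂⁿ ⊗ ℂⁿ ⊗ ℂⁿ (where X₁₂ = X ⊗ id, X₂₃ = id ⊗ X, and X₁₃ acts on the first and third factors). Then for every N ≥ 1 the corresponding transfer matrices commute: t(B) ∘ t(D) = t(D) ∘ t(B). In particular, for a family R(λ) of solutions of the quantum Yang–Baxter equation with spectral parameter such that R(λ−μ) is invertible, the transfer matrices t(R(λ)) and t(R(μ)) commute, yielding a family of commuting conserved quantities. -/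
/-!
STATEMENT 7: If A, B, D are linear maps on ℂⁿ ⊗ ℂⁿ with A invertible satisfying
A₁₂ B₁₃ D₂₃ = D₂₃ B₁₃ A₁₂, then for every N ≥ 1 the transfer matrices commute:
t(B) ∘ t(D) = t(D) ∘ t(B).

Operators are represented by their matrices in the standard product bases
(output index first, so matrix multiplication is composition).
-/

open Complex Matrix

/-- The transfer matrix `t(R)` on (ℂⁿ)^{⊗N}, with entries
`t_{i₁⋯i_N}^{j₁⋯j_N} = Σ_b ∏_k R_{(b_k, i_k)}^{(b_{k+1}, j_k)}` (indices mod N);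
here `R (b,j) (a,i) = R_{(a,i)}^{(b,j)}` (output index first). -/
noncomputable def transfer {n : ℕ} (N : ℕ) [NeZero N]
    (R : Matrix (Fin n × Fin n) (Fin n × Fin n) ℂ) :
    Matrix (ZMod N → Fin n) (ZMod N → Fin n) ℂ :=
  fun j i => ∑ b : ZMod N → Fin n, ∏ k : ZMod N, R (b (k + 1), j k) (b k, i k)


/-!
Both `t(B) t(D)` and `t(D) t(B)` are cyclic traces, over closed paths in a doubled auxiliary
space, of one-site blocks; read at fixed physical indices, the Yang–Baxter relation says that `A`
conjugates the blocks of the first into those of the second (with the two auxiliary factors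
swapped). A cyclic trace is invariant under conjugating every site by the same invertible matrix,
since the factors `A⁻¹ A` between neighbouring sites cancel around the cycle.
-/

open scoped Kronecker

section CyclicTrace

variable {α β S : Type*} [Fintype α] [Fintype β] [CommSemiring S] (N : ℕ) [NeZero N]

/-- The trace of the ordered product `L (N-1) * ⋯ * L 1 * L 0`. -/
def cyclicTrace (L : ZMod N → Matrix α α S) : S :=
  ∑ b : ZMod N → α, ∏ k, L k (b (k + 1)) (b k)

lemma cyclicTrace_mul (P Q : ZMod N → Matrix α α S) :
    cyclicTrace N (fun k => P k * Q k)
      = ∑ b : ZMod N → α, ∑ c : ZMod N → α,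
          (∏ k, P k (b (k + 1)) (c k)) * ∏ k, Q k (c k) (b k) := by
  refine Finset.sum_congr rfl fun b _ => ?_
  simp only [Matrix.mul_apply, Finset.prod_univ_sum, Finset.prod_mul_distrib]
  rfl

lemma sum_comp_add_one {γ : Type*} (f : (ZMod N → α) → γ) [AddCommMonoid γ] :
    ∑ b : ZMod N → α, f (fun k => b (k + 1)) = ∑ b, f b :=
  Fintype.sum_bijective _
    ((Equiv.addRight (1 : ZMod N)).arrowCongr (Equiv.refl α)).symm.bijective _ _ fun _ => rfl

lemma cyclicTrace_mul_comm (P Q : ZMod N → Matrix α α S) :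
    cyclicTrace N (fun k => P k * Q k) = cyclicTrace N (fun k => Q (k + 1) * P k) := by
  rw [cyclicTrace_mul, cyclicTrace_mul]
  conv_rhs => rw [Finset.sum_comm, ← sum_comp_add_one]
  refine Finset.sum_congr rfl fun b _ => Finset.sum_congr rfl fun c _ => ?_
  rw [mul_comm, ← Equiv.prod_comp (Equiv.addRight (1 : ZMod N)) (fun k => Q k (c k) (b k))]
  rfl

lemma cyclicTrace_conj [DecidableEq α] (G H : Matrix α α S) (hGH : G * H = 1)
    (L : ZMod N → Matrix α α S) :
    cyclicTrace N (fun k => H * L k * G) = cyclicTrace N L := by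
  simp only [cyclicTrace_mul_comm N (fun k => H * L k) (fun _ => G), ← mul_assoc, hGH, one_mul]

lemma cyclicTrace_submatrix (e : α ≃ β) (L : ZMod N → Matrix β β S) :
    cyclicTrace N (fun k => (L k).submatrix e e) = cyclicTrace N L :=
  Fintype.sum_equiv ((Equiv.refl _).arrowCongr e) _ _ fun _ => rfl

lemma cyclicTrace_kronecker (L : ZMod N → Matrix α α S) (M : ZMod N → Matrix β β S) :
    cyclicTrace N (fun k => L k ⊗ₖ M k) = cyclicTrace N L * cyclicTrace N M := by
  rw [cyclicTrace, cyclicTrace, cyclicTrace, Finset.sum_mul_sum, ← Fintype.sum_prod_type',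
    ← (Equiv.arrowProdEquivProdArrow (ZMod N) (fun _ => α) (fun _ => β)).symm.sum_comp]
  refine Finset.sum_congr rfl fun b _ => ?_
  rw [← Finset.prod_mul_distrib]
  rfl

lemma sum_cyclicTrace {ι : Type*} [Fintype ι] (F : ZMod N → ι → Matrix α α S) :
    ∑ m : ZMod N → ι, cyclicTrace N (fun k => F k (m k)) = cyclicTrace N (fun k => ∑ x, F k x) := by
  simp only [cyclicTrace, Matrix.sum_apply, Finset.prod_univ_sum]
  exact Finset.sum_comm

end CyclicTrace

section AuxBlock

variable {α ι S : Type*}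

/-- The matrix on the auxiliary factor `α` carried by `R` from physical index `i` to `j`;
`transfer N R` is the cyclic trace of the blocks `auxBlock R (j k) (i k)`. -/
def auxBlock (R : Matrix (α × ι) (α × ι) S) (j i : ι) : Matrix α α S :=
  fun a b => R (a, j) (b, i)

/-- The one-site block of `t(B) t(D)`: `B` and `D` act on two auxiliary factors and are composed
along the physical one. -/
def auxBlockProd [Fintype ι] [Semiring S] (B D : Matrix (α × ι) (α × ι) S) (j i : ι) :
    Matrix (α × α) (α × α) S :=
  ∑ m, auxBlock B j m ⊗ₖ auxBlock D m i

lemma auxBlockProd_apply [Fintype ι] [Semiring S] (B D : Matrix (α × ι) (α × ι) S) (j i : ι)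
    (a b : α × α) :
    auxBlockProd B D j i a b = ∑ m, B (a.1, j) (b.1, m) * D (a.2, m) (b.2, i) := by
  simp only [auxBlockProd, Matrix.sum_apply]
  rfl

end AuxBlock

lemma transfer_mul_apply {n : ℕ} (N : ℕ) [NeZero N]
    (B D : Matrix (Fin n × Fin n) (Fin n × Fin n) ℂ) (j i : ZMod N → Fin n) :
    (transfer N B * transfer N D) j i = cyclicTrace N (fun k => auxBlockProd B D (j k) (i k)) := by
  simp only [auxBlockProd, Matrix.mul_apply, ← sum_cyclicTrace, cyclicTrace_kronecker]
  rfl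

section Legs

variable {n : ℕ} (A B D : Matrix (Fin n × Fin n) (Fin n × Fin n) ℂ)
  (M : Matrix (Fin n × Fin n × Fin n) (Fin n × Fin n × Fin n) ℂ) (p q : Fin n × Fin n × Fin n)

lemma leg12_mul_apply :
    (leg12 A * M) p q = ∑ r : Fin n × Fin n, A (p.1, p.2.1) r * M (r.1, r.2, p.2.2) q := by
  simp [Matrix.mul_apply, Fintype.sum_prod_type, leg12]

lemma mul_leg12_apply :
    (M * leg12 A) p q = ∑ r : Fin n × Fin n, M p (r.1, r.2, q.2.2) * A r (q.1, q.2.1) := by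
  simp [Matrix.mul_apply, Fintype.sum_prod_type, leg12]

lemma leg13_mul_leg23_apply :
    (leg13 B * leg23 D) p q = auxBlockProd B D p.2.2 q.2.2 (p.1, p.2.1) (q.1, q.2.1) := by
  simp [Matrix.mul_apply, Fintype.sum_prod_type, leg13, leg23, auxBlockProd_apply]

lemma leg23_mul_leg13_apply :
    (leg23 D * leg13 B) p q = auxBlockProd D B p.2.2 q.2.2 (p.2.1, p.1) (q.2.1, q.1) := by
  simp [Matrix.mul_apply, Fintype.sum_prod_type, leg13, leg23, auxBlockProd_apply, mul_comm]

end Legs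

lemma mul_auxBlockProd_of_yangBaxter {n : ℕ} {A B D : Matrix (Fin n × Fin n) (Fin n × Fin n) ℂ}
    (hYB : leg12 A * leg13 B * leg23 D = leg23 D * leg13 B * leg12 A) (j i : Fin n) :
    A * auxBlockProd B D j i = (auxBlockProd D B j i).submatrix Prod.swap Prod.swap * A := by
  ext a b
  have h := congrFun (congrFun hYB (a.1, a.2, j)) (b.1, b.2, i)
  rw [mul_assoc, leg12_mul_apply, mul_leg12_apply] at h
  simp only [leg13_mul_leg23_apply, leg23_mul_leg13_apply] at h
  simpa only [Matrix.mul_apply, Matrix.submatrix_apply, Prod.swap, Prod.mk.eta] using h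

theorem transfer_matrices_commute {n : ℕ} (A B D : Matrix (Fin n × Fin n) (Fin n × Fin n) ℂ)
    (hA : IsUnit A)
    (hYB : leg12 A * leg13 B * leg23 D = leg23 D * leg13 B * leg12 A)
    (N : ℕ) [NeZero N] :
    transfer N B * transfer N D = transfer N D * transfer N B := by
  obtain ⟨u, rfl⟩ := hA
  ext j i
  rw [transfer_mul_apply, transfer_mul_apply]
  conv_rhs => rw [← cyclicTrace_submatrix N (Equiv.prodComm _ _),
    ← cyclicTrace_conj N (u : Matrix _ _ ℂ) ↑u⁻¹ u.mul_inv]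
  congr 1
  funext k
  rw [mul_assoc, Units.eq_inv_mul_iff_mul_eq, mul_auxBlockProd_of_yangBaxter hYB]
  rfl
end

section
/- Fix γ ∈ ℂ. Define R(δ), δ ∈ ℂ, as the linear map on ℂ² ⊗ ℂ² whose matrix in the ordered basis (e₁⊗e₁, e₁⊗e₂, e₂⊗e₁, e₂⊗e₂) is i times the matrix with diagonal entries (sin γ(δ+1), sin γδ, sin γδ, sin γ(δ+1)), entry e^{−iγδ} sin γ in position (2,3), entry e^{iγδ} sin γ in position (3,2), and all other entries zero. Then R satisfies the quantum Yang–Baxter equation with spectral parameter: R₁₂(δ−δ′) R₁₃(δ) R₂₃(δ′) = R₂₃(δ′) R₁₃(δ) R₁₂(δ−δ′) for all δ, δ′ ∈ ℂ. -/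
/-!
STATEMENT 12: The trigonometric XXZ R-matrix R(δ) (with the factor i and the phases
e^{∓iγδ} sin γ in positions (2,3) and (3,2)) satisfies the quantum Yang–Baxter equation
with spectral parameter.

Linear maps on ℂⁿ ⊗ ℂⁿ are represented by their matrices in the standard product basis.
-/

open Complex

/-- The trigonometric XXZ R-matrix `R(δ)` on ℂ² ⊗ ℂ²: in the ordered basis
(e₁⊗e₁, e₁⊗e₂, e₂⊗e₁, e₂⊗e₂) it is i times the matrix with diagonal
(sin γ(δ+1), sin γδ, sin γδ, sin γ(δ+1)), entry e^{−iγδ} sin γ in position (2,3),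
entry e^{iγδ} sin γ in position (3,2), and zeros elsewhere. -/
noncomputable def trigR (γ δ : ℂ) : Matrix (Fin 2 × Fin 2) (Fin 2 × Fin 2) ℂ :=
  fun p q =>
    Complex.I *
      (if p = q then
        (if p.1 = p.2 then Complex.sin (γ * (δ + 1)) else Complex.sin (γ * δ))
      else if p = ((0 : Fin 2), (1 : Fin 2)) ∧ q = ((1 : Fin 2), (0 : Fin 2)) then
        Complex.exp (-(Complex.I * γ * δ)) * Complex.sin γ
      else if p = ((1 : Fin 2), (0 : Fin 2)) ∧ q = ((0 : Fin 2), (1 : Fin 2)) then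
        Complex.exp (Complex.I * γ * δ) * Complex.sin γ
      else 0)


private lemma expL2 (a b : ℂ) : Complex.exp a * Complex.exp b = Complex.exp (a + b) :=
  (Complex.exp_add a b).symm
private lemma expL1 (x a b : ℂ) : x * Complex.exp a * Complex.exp b = x * Complex.exp (a + b) := by
  rw [mul_assoc, expL2]
private lemma expL4 (a : ℂ) (n : ℕ) : Complex.exp a ^ n = Complex.exp (n * a) := by
  rw [Complex.exp_nat_mul]
private lemma expL3 (x a : ℂ) (n : ℕ) : x * Complex.exp a ^ n = x * Complex.exp (n * a) := by
  rw [expL4]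

set_option maxHeartbeats 1600000 in
theorem trigR_satisfies_YBE (γ : ℂ) : SpectralYBE (fun δ => trigR γ δ) := by
  intro lam mu
  have t0000 : ∀ δ, trigR γ δ ((0:Fin 2),(0:Fin 2)) ((0:Fin 2),(0:Fin 2)) = Complex.I * Complex.sin (γ*(δ+1)) := fun δ => by
    norm_num [trigR, Prod.ext_iff]
  have t0001 : ∀ δ, trigR γ δ ((0:Fin 2),(0:Fin 2)) ((0:Fin 2),(1:Fin 2)) = 0 := fun δ => by
    norm_num [trigR, Prod.ext_iff]
  have t0010 : ∀ δ, trigR γ δ ((0:Fin 2),(0:Fin 2)) ((1:Fin 2),(0:Fin 2)) = 0 := fun δ => by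
    norm_num [trigR, Prod.ext_iff]
  have t0011 : ∀ δ, trigR γ δ ((0:Fin 2),(0:Fin 2)) ((1:Fin 2),(1:Fin 2)) = 0 := fun δ => by
    norm_num [trigR, Prod.ext_iff]
  have t0100 : ∀ δ, trigR γ δ ((0:Fin 2),(1:Fin 2)) ((0:Fin 2),(0:Fin 2)) = 0 := fun δ => by
    norm_num [trigR, Prod.ext_iff]
  have t0101 : ∀ δ, trigR γ δ ((0:Fin 2),(1:Fin 2)) ((0:Fin 2),(1:Fin 2)) = Complex.I * Complex.sin (γ*δ) := fun δ => by
    norm_num [trigR, Prod.ext_iff]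
  have t0110 : ∀ δ, trigR γ δ ((0:Fin 2),(1:Fin 2)) ((1:Fin 2),(0:Fin 2)) = Complex.I * (Complex.exp (-(Complex.I*γ*δ)) * Complex.sin γ) := fun δ => by
    norm_num [trigR, Prod.ext_iff]
  have t0111 : ∀ δ, trigR γ δ ((0:Fin 2),(1:Fin 2)) ((1:Fin 2),(1:Fin 2)) = 0 := fun δ => by
    norm_num [trigR, Prod.ext_iff]
  have t1000 : ∀ δ, trigR γ δ ((1:Fin 2),(0:Fin 2)) ((0:Fin 2),(0:Fin 2)) = 0 := fun δ => by
    norm_num [trigR, Prod.ext_iff]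
  have t1001 : ∀ δ, trigR γ δ ((1:Fin 2),(0:Fin 2)) ((0:Fin 2),(1:Fin 2)) = Complex.I * (Complex.exp (Complex.I*γ*δ) * Complex.sin γ) := fun δ => by
    norm_num [trigR, Prod.ext_iff]
  have t1010 : ∀ δ, trigR γ δ ((1:Fin 2),(0:Fin 2)) ((1:Fin 2),(0:Fin 2)) = Complex.I * Complex.sin (γ*δ) := fun δ => by
    norm_num [trigR, Prod.ext_iff]
  have t1011 : ∀ δ, trigR γ δ ((1:Fin 2),(0:Fin 2)) ((1:Fin 2),(1:Fin 2)) = 0 := fun δ => by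
    norm_num [trigR, Prod.ext_iff]
  have t1100 : ∀ δ, trigR γ δ ((1:Fin 2),(1:Fin 2)) ((0:Fin 2),(0:Fin 2)) = 0 := fun δ => by
    norm_num [trigR, Prod.ext_iff]
  have t1101 : ∀ δ, trigR γ δ ((1:Fin 2),(1:Fin 2)) ((0:Fin 2),(1:Fin 2)) = 0 := fun δ => by
    norm_num [trigR, Prod.ext_iff]
  have t1110 : ∀ δ, trigR γ δ ((1:Fin 2),(1:Fin 2)) ((1:Fin 2),(0:Fin 2)) = 0 := fun δ => by
    norm_num [trigR, Prod.ext_iff]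
  have t1111 : ∀ δ, trigR γ δ ((1:Fin 2),(1:Fin 2)) ((1:Fin 2),(1:Fin 2)) = Complex.I * Complex.sin (γ*(δ+1)) := fun δ => by
    norm_num [trigR, Prod.ext_iff]
  have two : ∀ x : Fin 2, x = 0 ∨ x = 1 := by decide
  have f01 : ((0:Fin 2) = 1) = False := eq_false (by decide)
  have f10 : ((1:Fin 2) = 0) = False := eq_false (by decide)
  ext p q
  obtain ⟨p1, p2, p3⟩ := p
  obtain ⟨q1, q2, q3⟩ := q
  rcases two p1 with rfl | rfl <;> rcases two p2 with rfl | rfl <;> rcases two p3 with rfl | rfl <;>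
    rcases two q1 with rfl | rfl <;> rcases two q2 with rfl | rfl <;> rcases two q3 with rfl | rfl <;>
    simp only [Matrix.mul_apply, Fintype.sum_prod_type, Fin.sum_univ_two, leg12, leg13, leg23,
      t0000, t0001, t0010, t0011, t0100, t0101, t0110, t0111, t1000, t1001, t1010, t1011, t1100, t1101, t1110, t1111,
      f01, f10, eq_self_iff_true, if_true, if_false, mul_zero, zero_mul, mul_one, one_mul,
      add_zero, zero_add] <;>
    simp only [Complex.sin] <;>
    ring_nf <;>
    simp only [expL4, expL3, expL2, expL1] <;>
    ring_nf
end

section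
/- Let q ∈ ℂ with q² ∉ ℝ. Then there do not exist 2×2 complex matrices K and X such that K is Hermitian and invertible, X is Hermitian and nonzero, and K X K⁻¹ = q² X. (In particular, for |q| = 1 with q² non-real, the algebra U_q(sl(2)) admits no representation by 2×2 Hermitian matrices in which the relation k x₊ k⁻¹ = q² x₊ holds with x₊ ≠ 0.) -/
/-!
STATEMENT 13: If q ∈ ℂ with q² ∉ ℝ, there are no 2×2 complex matrices K, X with K
Hermitian and invertible, X Hermitian and nonzero, such that K X K⁻¹ = q² X.

Hermitian means equal to the conjugate transpose with respect to the standard inner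
product on ℂ² (`Matrix.IsHermitian`).
-/

open Complex Matrix

theorem no_hermitian_pair_conjugation_by_nonreal_scalar (q : ℂ)
    (hq : (q ^ 2) ∉ Set.range ((↑) : ℝ → ℂ)) :
    ¬ ∃ K X : Matrix (Fin 2) (Fin 2) ℂ,
        K.IsHermitian ∧ IsUnit K ∧ X.IsHermitian ∧ X ≠ 0 ∧
        K * X * K⁻¹ = q ^ 2 • X := by
  rintro ⟨K, X, hK, hKu, hX, hX0, h⟩
  -- q² ≠ 1 and q² ≠ -1
  have hq1 : q ^ 2 ≠ 1 := fun h1 => hq ⟨1, by simp [h1]⟩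
  have hqm1 : q ^ 2 ≠ -1 := fun h1 => hq ⟨-1, by simp [h1]⟩
  have hKinv : K⁻¹ * K = 1 := nonsing_inv_mul K ((isUnit_iff_isUnit_det K).mp hKu)
  have hKinv2 : K * K⁻¹ = 1 := mul_nonsing_inv K ((isUnit_iff_isUnit_det K).mp hKu)
  -- trace X = 0
  have htr : trace X = q ^ 2 * trace X := by
    have := congrArg trace h
    rwa [trace_smul, trace_mul_comm (K * X) K⁻¹, ← mul_assoc, hKinv, one_mul,
      smul_eq_mul] at this
  have htrX : trace X = 0 := by
    by_contra hne
    have hz : (1 - q ^ 2) * trace X = 0 := by linear_combination htr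
    rcases mul_eq_zero.mp hz with h' | h'
    · exact hq1 (by linear_combination -h')
    · exact hne h'
  -- relation for X²
  have h2 : K * (X * X) * K⁻¹ = (q ^ 2 * q ^ 2) • (X * X) := by
    have : (K * X * K⁻¹) * (K * X * K⁻¹) = (q ^ 2 • X) * (q ^ 2 • X) := by rw [h]
    calc K * (X * X) * K⁻¹ = (K * X * K⁻¹) * (K * X * K⁻¹) := by
          simp only [Matrix.mul_assoc]
          rw [← Matrix.mul_assoc K⁻¹ K (X * K⁻¹), hKinv, Matrix.one_mul]
      _ = (q ^ 2 • X) * (q ^ 2 • X) := this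
      _ = (q ^ 2 * q ^ 2) • (X * X) := by
          rw [smul_mul_assoc, mul_smul_comm, smul_smul]
  have htr2 : trace (X * X) = (q ^ 2 * q ^ 2) * trace (X * X) := by
    have := congrArg trace h2
    rwa [trace_smul, trace_mul_comm (K * (X * X)) K⁻¹, ← mul_assoc, hKinv, one_mul,
      smul_eq_mul] at this
  have hq4 : q ^ 2 * q ^ 2 ≠ 1 := by
    intro h1
    have : (q ^ 2 - 1) * (q ^ 2 + 1) = 0 := by linear_combination h1
    rcases mul_eq_zero.mp this with h' | h'
    · exact hq1 (by linear_combination h')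
    · exact hqm1 (by linear_combination h')
  have htrX2 : trace (X * X) = 0 := by
    by_contra hne
    have hz : (1 - q ^ 2 * q ^ 2) * trace (X * X) = 0 := by linear_combination htr2
    rcases mul_eq_zero.mp hz with h' | h'
    · exact hq4 (by linear_combination -h')
    · exact hne h'
  -- extract entries
  have ha : (starRingEnd ℂ) (X 0 0) = X 0 0 := hX.apply 0 0
  have hd : (starRingEnd ℂ) (X 1 1) = X 1 1 := hX.apply 1 1
  have hb : (starRingEnd ℂ) (X 0 1) = X 1 0 := hX.apply 1 0
  have e1 : X 0 0 + X 1 1 = 0 := by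
    simpa [Matrix.trace, Fin.sum_univ_two] using htrX
  have e2 : X 0 0 * X 0 0 + X 0 1 * X 1 0 + (X 1 0 * X 0 1 + X 1 1 * X 1 1) = 0 := by
    simpa [Matrix.trace, Matrix.mul_apply, Fin.sum_univ_two] using htrX2
  -- real parts
  have haim : (X 0 0).im = 0 := by
    have := Complex.conj_eq_iff_im.mp ha; exact this
  have hdim : (X 1 1).im = 0 := by
    have := Complex.conj_eq_iff_im.mp hd; exact this
  have hnorm : X 1 0 * X 0 1 = (Complex.normSq (X 0 1) : ℂ) := by
    rw [← hb, mul_comm]; exact Complex.mul_conj (X 0 1)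
  have hnorm' : X 0 1 * X 1 0 = (Complex.normSq (X 0 1) : ℂ) := by
    rw [← hb]; exact Complex.mul_conj (X 0 1)
  have ea : X 0 0 = ((X 0 0).re : ℂ) := by
    exact (Complex.re_add_im (X 0 0)).symm.trans (by rw [haim]; simp)
  have ed : X 1 1 = ((X 1 1).re : ℂ) := by
    exact (Complex.re_add_im (X 1 1)).symm.trans (by rw [hdim]; simp)
  set a := (X 0 0).re
  set d := (X 1 1).re
  have e1' : a + d = 0 := by
    have : ((a + d : ℝ) : ℂ) = 0 := by push_cast; rw [← ea, ← ed]; exact e1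
    exact_mod_cast this
  have e2c : ((a : ℂ)) * a + (Complex.normSq (X 0 1) : ℂ) +
      ((Complex.normSq (X 0 1) : ℂ) + (d : ℂ) * d) = 0 := by
    rw [← ea, ← ed]
    linear_combination e2 - hnorm - hnorm'
  have e2' : a * a + Complex.normSq (X 0 1) + (Complex.normSq (X 0 1) + d * d) = 0 := by
    exact_mod_cast e2c
  have hns : Complex.normSq (X 0 1) = 0 := by
    nlinarith [Complex.normSq_nonneg (X 0 1), sq_nonneg a, sq_nonneg d]
  have ha0 : a = 0 := by nlinarith [Complex.normSq_nonneg (X 0 1)]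
  have hd0 : d = 0 := by nlinarith [Complex.normSq_nonneg (X 0 1)]
  have hb0 : X 0 1 = 0 := Complex.normSq_eq_zero.mp hns
  apply hX0
  ext i j
  fin_cases i <;> fin_cases j <;>
    simp_all [← hb, ea, ed, ha0, hd0]
end
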